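/- arXiv:2211.09624 — 8 statements merged into one kernel-verified Lean document; each statement's English description precedes it below -/
import Mathlib

section
/- Let S be an inverse semigroup. S has only finite L-classes if and only if S has only finite R-classes, if and only if S has only finite D-classes. -/
/-!
When idempotents commute, inverses are unique, so `star` is an involution. It exchanges
L-classes and R-classes (`x L s ↔ star x R star s`), hence one family is finite iff the other
is. The D-class of `s` is the union of the L-classes of the members of the R-class of `s`, and
it contains the L-class of `s`.
-/

namespace InverseSemigroup

variable {S : Type*}

section Mul

variable [Mul S] (star : S → S)

def lClass (s : S) : Set S := {x | star x * x = star s * s}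

def rClass (s : S) : Set S := {x | x * star x = s * star s}

def dClass (s : S) : Set S := {x | ∃ u, star x * x = star u * u ∧ u * star u = s * star s}

variable {star}

theorem rClass_eq_preimage_lClass (h : Function.Involutive star) (s : S) :
    rClass star s = star ⁻¹' lClass star (star s) := by
  ext x
  simp only [rClass, lClass, Set.mem_ofPred_eq, Set.mem_preimage, h x, h s]

theorem lClass_eq_preimage_rClass (h : Function.Involutive star) (s : S) :
    lClass star s = star ⁻¹' rClass star (star s) := by
  ext x
  simp only [rClass, lClass, Set.mem_ofPred_eq, Set.mem_preimage, h x, h s]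

theorem finite_lClass_iff_finite_rClass (h : Function.Involutive star) :
    (∀ s, (lClass star s).Finite) ↔ ∀ s, (rClass star s).Finite :=
  ⟨fun hL s => rClass_eq_preimage_lClass h s ▸ (hL _).preimage h.injective.injOn,
    fun hR s => lClass_eq_preimage_rClass h s ▸ (hR _).preimage h.injective.injOn⟩

theorem dClass_eq_biUnion_lClass (s : S) :
    dClass star s = ⋃ u ∈ rClass star s, lClass star u := by
  ext x
  simp only [dClass, rClass, lClass, Set.mem_ofPred_eq, Set.mem_iUnion, exists_prop, and_comm]

theorem lClass_subset_dClass (s : S) : lClass star s ⊆ dClass star s :=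
  fun _ hx => ⟨s, hx, rfl⟩

theorem finite_lClass_iff_finite_dClass (h : Function.Involutive star) :
    (∀ s, (lClass star s).Finite) ↔ ∀ s, (dClass star s).Finite := by
  refine ⟨fun hL s => ?_, fun hD s => (hD s).subset (lClass_subset_dClass s)⟩
  rw [dClass_eq_biUnion_lClass]
  exact ((finite_lClass_iff_finite_rClass h).mp hL s).biUnion fun u _ => hL u

end Mul

section Semigroup

variable [Semigroup S]

theorem isIdempotentElem_mul_of_mul_mul_self {s t : S} (h : s * t * s = s) :
    IsIdempotentElem (t * s) ∧ IsIdempotentElem (s * t) := by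
  constructor
  · rw [IsIdempotentElem, mul_assoc, ← mul_assoc s t s, h]
  · rw [IsIdempotentElem, ← mul_assoc, h]

theorem eq_of_isInverse_of_idempotents_commute
    (hcomm : ∀ e f : S, IsIdempotentElem e → IsIdempotentElem f → Commute e f) {s t t' : S}
    (h1 : s * t * s = s) (h2 : t * s * t = t) (h3 : s * t' * s = s) (h4 : t' * s * t' = t') :
    t = t' := by
  obtain ⟨hts, hst⟩ := isIdempotentElem_mul_of_mul_mul_self h1
  obtain ⟨ht's, hst'⟩ := isIdempotentElem_mul_of_mul_mul_self h3
  calc t = t * (s * t' * s) * t := by rw [h3, h2]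
    _ = (t' * s) * (t * s) * t := by simp only [mul_assoc, ← (hcomm _ _ hts ht's).eq]
    _ = t' * s * t := by rw [mul_assoc (t' * s), h2]
    _ = t' * s * t' * (s * t) := by rw [h4, mul_assoc]
    _ = t' * ((s * t) * (s * t')) := by simp only [mul_assoc, ← (hcomm _ _ hst hst').eq]
    _ = t' := by rw [← mul_assoc (s * t), h1, ← mul_assoc, h4]

end Semigroup

end InverseSemigroup

/-- An inverse semigroup has only finite L-classes iff it has only finite
R-classes, iff it has only finite D-classes. -/
theorem stmt_3 {S : Type*} [Semigroup S] (star : S → S)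
    (hinv : ∀ s : S, s * star s * s = s)
    (hinv2 : ∀ s : S, star s * s * star s = star s)
    (hcomm : ∀ e f : S, e * e = e → f * f = f → e * f = f * e) :
    ((∀ s : S, {x : S | star x * x = star s * s}.Finite) ↔
      (∀ s : S, {x : S | x * star x = s * star s}.Finite)) ∧
    ((∀ s : S, {x : S | star x * x = star s * s}.Finite) ↔
      (∀ s : S, {x : S | ∃ u : S, star x * x = star u * u ∧
        u * star u = s * star s}.Finite)) := by
  have hstar : Function.Involutive star := fun s =>
    InverseSemigroup.eq_of_isInverse_of_idempotents_commute hcomm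
      (hinv (star s)) (hinv2 (star s)) (hinv2 s) (hinv s)
  exact ⟨InverseSemigroup.finite_lClass_iff_finite_rClass hstar,
    InverseSemigroup.finite_lClass_iff_finite_dClass hstar⟩
end

section
/- Let S be an inverse semigroup with a right subinvariant extended metric d whose finite-distance components are exactly the L-classes. Then for every s ∈ S, the map L_s → L_{s*} given by t ↦ ts* is an isometry (where L_s denotes the L-class of s). -/
/-!
Right multiplication by `s*` and by `s` are mutually inverse on the L-class of `s`, since
`t s* s = t t* t = t` whenever `t* t = s* s`. Right subinvariance makes both maps
non-expanding, so each is an isometry. That `t s*` lands in the L-class of `s*` is the identity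
`(t s*)* (t s*) = s t* t s* = s s* s s* = s s*`, which uses `(ab)* = b* a*`, and this in turn
comes from uniqueness of inverses in an inverse semigroup.
-/

open scoped ENNReal

/-- `star` is the inversion of an inverse semigroup; commuting idempotents is what makes the
inverses unique (`IsInverseStar.eq_star_of_inverse`). -/
structure IsInverseStar {S : Type*} [Semigroup S] (star : S → S) : Prop where
  mul_star_mul : ∀ s, s * star s * s = s
  star_mul_star : ∀ s, star s * s * star s = star s
  idempotent_comm : ∀ e f : S, IsIdempotentElem e → IsIdempotentElem f → e * f = f * e

namespace IsInverseStar

variable {S : Type*} [Semigroup S] {star : S → S}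

theorem isIdempotentElem_star_mul (h : IsInverseStar star) (s : S) :
    IsIdempotentElem (star s * s) := by
  rw [IsIdempotentElem, ← mul_assoc, h.star_mul_star]

theorem isIdempotentElem_mul_star (h : IsInverseStar star) (s : S) :
    IsIdempotentElem (s * star s) := by
  rw [IsIdempotentElem, ← mul_assoc, h.mul_star_mul]

theorem eq_star_of_inverse (h : IsInverseStar star) {x y : S}
    (hxyx : x * y * x = x) (hyxy : y * x * y = y) : y = star x := by
  have hyx : IsIdempotentElem (y * x) := by rw [IsIdempotentElem, ← mul_assoc, hyxy]
  have hxy : IsIdempotentElem (x * y) := by rw [IsIdempotentElem, mul_assoc, ← mul_assoc y, hyxy]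
  have hy : y = star x * x * y :=
    calc y = y * x * y := hyxy.symm
      _ = y * (x * star x * x) * y := by rw [h.mul_star_mul]
      _ = (y * x) * (star x * x) * y := by simp only [mul_assoc]
      _ = (star x * x) * (y * x) * y := by
          rw [h.idempotent_comm _ _ hyx (h.isIdempotentElem_star_mul x)]
      _ = star x * x * y := by simp only [mul_assoc]; rw [← mul_assoc y, hyxy]
  have hz : star x = star x * x * y :=
    calc star x = star x * x * star x := (h.star_mul_star x).symm
      _ = star x * (x * y * x) * star x := by rw [hxyx]
      _ = star x * ((x * y) * (x * star x)) := by simp only [mul_assoc]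
      _ = star x * ((x * star x) * (x * y)) := by
          rw [h.idempotent_comm _ _ hxy (h.isIdempotentElem_mul_star x)]
      _ = star x * x * y := by simp only [← mul_assoc]; rw [h.star_mul_star]
  rw [hy, ← hz]

theorem star_star (h : IsInverseStar star) (s : S) : star (star s) = s :=
  (h.eq_star_of_inverse (h.star_mul_star s) (h.mul_star_mul s)).symm

theorem star_mul (h : IsInverseStar star) (a b : S) : star (a * b) = star b * star a := by
  refine (h.eq_star_of_inverse ?_ ?_).symm
  · calc a * b * (star b * star a) * (a * b) = a * ((b * star b) * (star a * a)) * b := by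
          simp only [mul_assoc]
      _ = a * star a * a * (b * star b * b) := by
          rw [h.idempotent_comm _ _ (h.isIdempotentElem_mul_star b) (h.isIdempotentElem_star_mul a)]
          simp only [mul_assoc]
      _ = a * b := by rw [h.mul_star_mul, h.mul_star_mul]
  · calc star b * star a * (a * b) * (star b * star a)
          = star b * ((star a * a) * (b * star b)) * star a := by simp only [mul_assoc]
      _ = star b * b * star b * (star a * a * star a) := by
          rw [h.idempotent_comm _ _ (h.isIdempotentElem_star_mul a) (h.isIdempotentElem_mul_star b)]
          simp only [mul_assoc]
      _ = star b * star a := by rw [h.star_mul_star, h.star_mul_star]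

end IsInverseStar

theorem mul_star_mul_eq_self_of_star_mul_eq {S : Type*} [Semigroup S] {star : S → S}
    (hinv : ∀ s : S, s * star s * s = s) {s t : S} (ht : star t * t = star s * s) :
    t * star s * s = t := by
  rw [mul_assoc, ← ht, ← mul_assoc, hinv]

theorem edist_mul_right_eq_of_mul_mul_eq {S : Type*} [Semigroup S] {d : S → S → ℝ≥0∞}
    (hsub : ∀ s t x : S, d (s * x) (t * x) ≤ d s t) {a b x y : S}
    (ha : a * x * y = a) (hb : b * x * y = b) : d (a * x) (b * x) = d a b := by
  refine le_antisymm (hsub a b x) ?_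
  simpa only [ha, hb] using hsub (a * x) (b * x) y

theorem stmt_4_general {S : Type*} [Semigroup S] (star : S → S)
    (hinv : ∀ s : S, s * star s * s = s)
    (hinv2 : ∀ s : S, star s * s * star s = star s)
    (hcomm : ∀ e f : S, e * e = e → f * f = f → e * f = f * e)
    (d : S → S → ℝ≥0∞)
    (hsub : ∀ s t x : S, d (s * x) (t * x) ≤ d s t)
    (s : S) :
    (∀ t : S, star t * t = star s * s →
      star (t * star s) * (t * star s) = star (star s) * star s) ∧
    (∀ t₁ t₂ : S, star t₁ * t₁ = star s * s → star t₂ * t₂ = star s * s →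
      d (t₁ * star s) (t₂ * star s) = d t₁ t₂) := by
  have h : IsInverseStar star := ⟨hinv, hinv2, hcomm⟩
  refine ⟨fun t ht => ?_, fun t₁ t₂ h₁ h₂ => ?_⟩
  · calc star (t * star s) * (t * star s) = s * (star t * t) * star s := by
          rw [h.star_mul, h.star_star]; simp only [mul_assoc]
      _ = star (star s) * star s := by rw [ht, ← mul_assoc, hinv, h.star_star]
  · exact edist_mul_right_eq_of_mul_mul_eq hsub (mul_star_mul_eq_self_of_star_mul_eq hinv h₁)
      (mul_star_mul_eq_self_of_star_mul_eq hinv h₂)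

/-- For a right subinvariant extended metric whose components are the L-classes,
the map `t ↦ t s*` is an isometry from the L-class of `s` onto (into) the
L-class of `s*`. -/
theorem stmt_4 {S : Type*} [Semigroup S] (star : S → S)
    (hinv : ∀ s : S, s * star s * s = s)
    (hinv2 : ∀ s : S, star s * s * star s = star s)
    (hcomm : ∀ e f : S, e * e = e → f * f = f → e * f = f * e)
    (d : S → S → ℝ≥0∞)
    (hrefl : ∀ x y : S, d x y = 0 ↔ x = y)
    (hsymm : ∀ x y : S, d x y = d y x)
    (htri : ∀ x y z : S, d x z ≤ d x y + d y z)
    (hcomp : ∀ x y : S, d x y ≠ ⊤ ↔ star x * x = star y * y)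
    (hsub : ∀ s t x : S, d (s * x) (t * x) ≤ d s t)
    (s : S) :
    (∀ t : S, star t * t = star s * s →
      star (t * star s) * (t * star s) = star (star s) * star s) ∧
    (∀ t₁ t₂ : S, star t₁ * t₁ = star s * s → star t₂ * t₂ = star s * s →
      d (t₁ * star s) (t₂ * star s) = d t₁ t₂) :=
  stmt_4_general star hinv hinv2 hcomm d hsub s
end

section
/- Let S be an inverse semigroup with a right subinvariant extended metric d whose components are the L-classes. If y ≤ x in the natural partial order, then d(y*y, y) ≤ d(x*x, x). -/
/-!
Write `e = y⁻¹y` and `f = x⁻¹x`. In an inverse semigroup `(xe)⁻¹ = ex⁻¹` for an idempotent `e`,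
so `y = xe` gives `e = y⁻¹y = efe = ef`, that is `fe = e`. Right subinvariance of `d` under
multiplication by `e` then turns `d(f, x)` into an upper bound for `d(fe, xe) = d(e, y)`.
-/

open scoped ENNReal

section Semigroup

variable {S : Type*} [Semigroup S] {star : S → S}

lemma isIdempotentElem_mul_of_mul_mul_self {a b : S} (h : a * b * a = a) :
    IsIdempotentElem (a * b) := by
  rw [IsIdempotentElem, ← mul_assoc, h]

lemma eq_of_isInverse (hcomm : ∀ e f : S, e * e = e → f * f = f → e * f = f * e)
    {y a b : S} (hya : y * a * y = y) (hay : a * y * a = a)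
    (hyb : y * b * y = y) (hby : b * y * b = b) : a = b := by
  have hcomm_right : a * y * (b * y) = b * y * (a * y) :=
    hcomm _ _ (isIdempotentElem_mul_of_mul_mul_self hay)
      (isIdempotentElem_mul_of_mul_mul_self hby)
  have hcomm_left : y * a * (y * b) = y * b * (y * a) :=
    hcomm _ _ (isIdempotentElem_mul_of_mul_mul_self hya)
      (isIdempotentElem_mul_of_mul_mul_self hyb)
  have ha : a = b * y * a := by
    calc a = a * y * (b * y) * a := by rw [mul_assoc a y, ← mul_assoc y, hyb, hay]
    _ = b * (y * a * y) * a := by rw [hcomm_right]; simp only [mul_assoc]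
    _ = b * y * a := by rw [hya, mul_assoc]
  have hb : b = b * y * a := by
    calc b = b * (y * a * (y * b)) := by rw [← mul_assoc (y * a), hya, ← mul_assoc, hby]
    _ = b * y * b * y * a := by rw [hcomm_left]; simp only [mul_assoc]
    _ = b * y * a := by rw [hby]
  rw [ha, ← hb]

lemma star_mul_of_isIdempotentElem (hinv : ∀ s : S, s * star s * s = s)
    (hinv2 : ∀ s : S, star s * s * star s = star s)
    (hcomm : ∀ e f : S, e * e = e → f * f = f → e * f = f * e)
    (x : S) {e : S} (he : IsIdempotentElem e) :
    star (x * e) = e * star x := by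
  have hf : IsIdempotentElem (star x * x) := isIdempotentElem_mul_of_mul_mul_self (hinv2 x)
  have hef : e * (star x * x) = star x * x * e := hcomm _ _ he hf
  refine eq_of_isInverse hcomm (hinv _) (hinv2 _) ?_ ?_
  · calc x * e * (e * star x) * (x * e) = x * (e * e * (star x * x)) * e := by
          simp only [mul_assoc]
    _ = x * star x * x * e := by
          rw [he.eq, hef, mul_assoc x, mul_assoc _ e e, he.eq]; simp only [mul_assoc]
    _ = x * e := by rw [hinv]
  · calc e * star x * (x * e) * (e * star x) = e * (star x * x * (e * e)) * star x := by
          simp only [mul_assoc]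
    _ = e * (star x * x * star x) := by
          rw [he.eq, ← hef, ← mul_assoc e e, he.eq]; simp only [mul_assoc]
    _ = e * star x := by rw [hinv2]

lemma star_mul_self_mul_of_isIdempotentElem (hinv : ∀ s : S, s * star s * s = s)
    (hinv2 : ∀ s : S, star s * s * star s = star s)
    (hcomm : ∀ e f : S, e * e = e → f * f = f → e * f = f * e)
    (x : S) {e : S} (he : IsIdempotentElem e) :
    star (x * e) * (x * e) = star x * x * e := by
  have hef : e * (star x * x) = star x * x * e :=
    hcomm _ _ he (isIdempotentElem_mul_of_mul_mul_self (hinv2 x))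
  rw [star_mul_of_isIdempotentElem hinv hinv2 hcomm x he, ← hef]
  calc e * star x * (x * e) = e * (star x * x * e) := by simp only [mul_assoc]
  _ = e * (star x * x) := by rw [← hef, ← mul_assoc, he.eq]

end Semigroup

theorem stmt_6_general {S : Type*} [Semigroup S] (star : S → S)
    (hinv : ∀ s : S, s * star s * s = s)
    (hinv2 : ∀ s : S, star s * s * star s = star s)
    (hcomm : ∀ e f : S, e * e = e → f * f = f → e * f = f * e)
    (d : S → S → ℝ≥0∞)
    (hsub : ∀ s t x : S, d (s * x) (t * x) ≤ d s t)
    (x y : S) (h : y = x * (star y * y)) :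
    d (star y * y) y ≤ d (star x * x) x := by
  have he : IsIdempotentElem (star y * y) := isIdempotentElem_mul_of_mul_mul_self (hinv2 y)
  have hfe : star x * x * (star y * y) = star y * y := by
    rw [← star_mul_self_mul_of_isIdempotentElem hinv hinv2 hcomm x he, ← h]
  calc d (star y * y) y = d (star x * x * (star y * y)) (x * (star y * y)) := by rw [hfe, ← h]
  _ ≤ d (star x * x) x := hsub _ _ _

/-- If `y ≤ x` in the natural partial order then `d(y*y, y) ≤ d(x*x, x)`. -/
theorem stmt_6 {S : Type*} [Semigroup S] (star : S → S)
    (hinv : ∀ s : S, s * star s * s = s)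
    (hinv2 : ∀ s : S, star s * s * star s = star s)
    (hcomm : ∀ e f : S, e * e = e → f * f = f → e * f = f * e)
    (d : S → S → ℝ≥0∞)
    (hrefl : ∀ x y : S, d x y = 0 ↔ x = y)
    (hsymm : ∀ x y : S, d x y = d y x)
    (htri : ∀ x y z : S, d x z ≤ d x y + d y z)
    (hcomp : ∀ x y : S, d x y ≠ ⊤ ↔ star x * x = star y * y)
    (hsub : ∀ s t x : S, d (s * x) (t * x) ≤ d s t)
    (x y : S) (h : y = x * (star y * y)) :
    d (star y * y) y ≤ d (star x * x) x :=
  stmt_6_general star hinv hinv2 hcomm d hsub x y h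
end

section
/- Let S be an inverse semigroup with a right subinvariant extended metric d whose components are the L-classes. Then any two L-classes contained in the same D-class are isometric. -/
/-!
Let `s L u R t` witness `s D t`. Green's lemma: right multiplication by `u⁻¹t` and by `t⁻¹u`
are mutually inverse bijections between the L-classes of `u = L_s` and of `t`. Right
subinvariance makes both maps nonexpanding, so each is an isometry; and since the L-classes
are exactly the sets of finite distance, nonexpanding right translations map L-classes into
L-classes.
-/

open scoped ENNReal
open Set

theorem Set.LeftInvOn.dist_eq_of_nonexpanding {α β : Type*} {dα : α → α → ℝ≥0∞}
    {dβ : β → β → ℝ≥0∞} {f : α → β} {g : β → α} {A : Set α} (hgf : LeftInvOn g f A)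
    (hf : ∀ a b, dβ (f a) (f b) ≤ dα a b) (hg : ∀ a b, dα (g a) (g b) ≤ dβ a b) :
    ∀ a ∈ A, ∀ b ∈ A, dβ (f a) (f b) = dα a b := by
  intro a ha b hb
  refine le_antisymm (hf a b) ?_
  calc dα a b = dα (g (f a)) (g (f b)) := by rw [hgf ha, hgf hb]
    _ ≤ dβ (f a) (f b) := hg _ _

namespace InverseSemigroup

variable {S : Type*} [Semigroup S] (star : S → S)

def LClass (s : S) : Set S := {x | star x * x = star s * s}

variable {star}

theorem mul_star_mul_self_of_mem_LClass (hinv : ∀ s : S, s * star s * s = s) {s x : S}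
    (hx : x ∈ LClass star s) : x * (star s * s) = x := by
  rw [← hx, ← mul_assoc, hinv]

theorem leftInvOn_mul_right_LClass (hinv : ∀ s : S, s * star s * s = s) {u t : S}
    (hR : u * star u = t * star t) :
    LeftInvOn (· * (star t * u)) (· * (star u * t)) (LClass star u) := by
  intro x hx
  calc x * (star u * t) * (star t * u) = x * star u * (t * star t * u) := by
        simp only [mul_assoc]
    _ = x * (star u * u) := by rw [← hR, hinv, mul_assoc]
    _ = x := mul_star_mul_self_of_mem_LClass hinv hx

theorem mapsTo_mul_right_LClass {d : S → S → ℝ≥0∞}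
    (hcomp : ∀ x y : S, d x y ≠ ⊤ ↔ star x * x = star y * y)
    (hsub : ∀ s t x : S, d (s * x) (t * x) ≤ d s t) (s a : S) :
    MapsTo (· * a) (LClass star s) (LClass star (s * a)) := fun x hx =>
  (hcomp _ _).1 (ne_top_of_le_ne_top ((hcomp x s).2 hx) (hsub x s a))

theorem mul_star_mul_eq_of_mul_star_eq (hinv : ∀ s : S, s * star s * s = s) {u t : S}
    (hR : u * star u = t * star t) : u * (star u * t) = t := by
  rw [← mul_assoc, hR, hinv]

end InverseSemigroup

open InverseSemigroup

theorem stmt_7_general {S : Type*} [Semigroup S] (star : S → S)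
    (hinv : ∀ s : S, s * star s * s = s)
    (d : S → S → ℝ≥0∞)
    (hcomp : ∀ x y : S, d x y ≠ ⊤ ↔ star x * x = star y * y)
    (hsub : ∀ s t x : S, d (s * x) (t * x) ≤ d s t)
    (s t : S) (h : ∃ u : S, star s * s = star u * u ∧ u * star u = t * star t) :
    ∃ f : S → S,
      Set.BijOn f {x : S | star x * x = star s * s} {x : S | star x * x = star t * t} ∧
      ∀ a ∈ {x : S | star x * x = star s * s}, ∀ b ∈ {x : S | star x * x = star s * s},
        d (f a) (f b) = d a b := by
  obtain ⟨u, hsu, hR⟩ := h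
  rw [hsu]
  have hf : MapsTo (· * (star u * t)) (LClass star u) (LClass star t) := by
    simpa only [mul_star_mul_eq_of_mul_star_eq hinv hR] using
      mapsTo_mul_right_LClass hcomp hsub u (star u * t)
  have hg : MapsTo (· * (star t * u)) (LClass star t) (LClass star u) := by
    simpa only [mul_star_mul_eq_of_mul_star_eq hinv hR.symm] using
      mapsTo_mul_right_LClass hcomp hsub t (star t * u)
  have hgf := leftInvOn_mul_right_LClass hinv hR
  refine ⟨(· * (star u * t)), InvOn.bijOn ⟨hgf, leftInvOn_mul_right_LClass hinv hR.symm⟩ hf hg,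
    hgf.dist_eq_of_nonexpanding (fun a b => hsub a b _) (fun a b => hsub a b _)⟩

/-- Any two L-classes in the same D-class are isometric. -/
theorem stmt_7 {S : Type*} [Semigroup S] (star : S → S)
    (hinv : ∀ s : S, s * star s * s = s)
    (hinv2 : ∀ s : S, star s * s * star s = star s)
    (hcomm : ∀ e f : S, e * e = e → f * f = f → e * f = f * e)
    (d : S → S → ℝ≥0∞)
    (hrefl : ∀ x y : S, d x y = 0 ↔ x = y)
    (hsymm : ∀ x y : S, d x y = d y x)
    (htri : ∀ x y z : S, d x z ≤ d x y + d y z)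
    (hcomp : ∀ x y : S, d x y ≠ ⊤ ↔ star x * x = star y * y)
    (hsub : ∀ s t x : S, d (s * x) (t * x) ≤ d s t)
    (s t : S) (h : ∃ u : S, star s * s = star u * u ∧ u * star u = t * star t) :
    ∃ f : S → S,
      Set.BijOn f {x : S | star x * x = star s * s} {x : S | star x * x = star t * t} ∧
      ∀ a ∈ {x : S | star x * x = star s * s}, ∀ b ∈ {x : S | star x * x = star s * s},
        d (f a) (f b) = d a b :=
  stmt_7_general star hinv d hcomp hsub s t h
end

section
/- Let S be an inverse semigroup with a right subinvariant extended metric d whose components are the L-classes. Then l(s) := d(s*s, s) defines a length function on S, i.e.: l(s) = 0 iff s is idempotent; l(s) = l(s*); and l(st) ≤ l(s) + l(t) for all s,t ∈ S. -/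
open scoped ENNReal

/-!
Write `s'` for `star s`. Since idempotents commute, inverses are unique, so `star` is an
involutive anti-automorphism fixing the idempotents; `l(s) = 0 ↔ s s = s` is then immediate.
Right subinvariance applied to `s' = (s's)s'` and `s = (ss')s` gives `l(s) = d(ss', s') = l(s')`.
For subadditivity, `l(st) = d(stt's', t's')`, and the midpoint `tt's' = (s's)(tt's')` splits
this distance into right translates of `d(s, s's)` and `d(tt', t')`.
-/

namespace InverseSemigroup

variable {S : Type*} [Semigroup S] {star : S → S}

theorem isIdempotentElem_mul_of_mul_mul_eq {x a : S} (h : x * a * x = x) :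
    IsIdempotentElem (x * a) := by
  rw [IsIdempotentElem, ← mul_assoc, h]

theorem isIdempotentElem_mul_of_mul_mul_eq' {x a : S} (h : x * a * x = x) :
    IsIdempotentElem (a * x) := by
  rw [IsIdempotentElem, mul_assoc, ← mul_assoc x, h]

theorem eq_of_inverse (hcomm : ∀ e f : S, e * e = e → f * f = f → e * f = f * e)
    {x a b : S} (hxa : x * a * x = x) (hax : a * x * a = a)
    (hxb : x * b * x = x) (hbx : b * x * b = b) : a = b := by
  have hcomm_ax_bx : a * x * (b * x) = b * x * (a * x) :=
    hcomm _ _ (isIdempotentElem_mul_of_mul_mul_eq' hxa) (isIdempotentElem_mul_of_mul_mul_eq' hxb)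
  have hcomm_xa_xb : x * a * (x * b) = x * b * (x * a) :=
    hcomm _ _ (isIdempotentElem_mul_of_mul_mul_eq hxa) (isIdempotentElem_mul_of_mul_mul_eq hxb)
  have ha : a = b * x * a :=
    calc a = a * (x * b * x) * a := by rw [hxb, hax]
      _ = a * x * (b * x) * a := by simp only [mul_assoc]
      _ = b * (x * a * x) * a := by rw [hcomm_ax_bx]; simp only [mul_assoc]
      _ = b * x * a := by rw [hxa]
  have hb : b = b * x * a :=
    calc b = b * (x * a * x) * b := by rw [hxa, hbx]
      _ = b * (x * a * (x * b)) := by simp only [mul_assoc]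
      _ = b * x * b * x * a := by rw [hcomm_xa_xb]; simp only [mul_assoc]
      _ = b * x * a := by rw [hbx]
  rw [ha, ← hb]

theorem star_mul_self_mul_comm (hinv : ∀ s : S, s * star s * s = s)
    (hcomm : ∀ e f : S, e * e = e → f * f = f → e * f = f * e) (s t : S) :
    star s * s * (t * star t) = t * star t * (star s * s) :=
  hcomm _ _ (isIdempotentElem_mul_of_mul_mul_eq' (hinv s))
    (isIdempotentElem_mul_of_mul_mul_eq (hinv t))

section Involution

variable (hinv : ∀ s : S, s * star s * s = s) (hinv2 : ∀ s : S, star s * s * star s = star s)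
  (hcomm : ∀ e f : S, e * e = e → f * f = f → e * f = f * e)
include hinv hinv2 hcomm

theorem star_eq_self_of_isIdempotentElem {e : S} (he : IsIdempotentElem e) : star e = e :=
  eq_of_inverse hcomm (hinv e) (hinv2 e) (by rw [he, he]) (by rw [he, he])

theorem star_star (s : S) : star (star s) = s :=
  eq_of_inverse hcomm (hinv (star s)) (hinv2 (star s)) (hinv2 s) (hinv s)

theorem star_mul (s t : S) : star (s * t) = star t * star s := by
  refine eq_of_inverse hcomm (hinv (s * t)) (hinv2 (s * t)) ?_ ?_
  · calc s * t * (star t * star s) * (s * t) = s * (t * star t * (star s * s)) * t := by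
          simp only [mul_assoc]
      _ = s * star s * s * (t * star t * t) := by
          rw [← star_mul_self_mul_comm hinv hcomm]; simp only [mul_assoc]
      _ = s * t := by rw [hinv, hinv]
  · calc star t * star s * (s * t) * (star t * star s)
          = star t * (star s * s * (t * star t)) * star s := by simp only [mul_assoc]
      _ = star t * t * star t * (star s * s * star s) := by
          rw [star_mul_self_mul_comm hinv hcomm]; simp only [mul_assoc]
      _ = star t * star s := by rw [hinv2, hinv2]

theorem star_mul_self_eq_self_iff {s : S} : star s * s = s ↔ IsIdempotentElem s := by
  refine ⟨fun h => ?_, fun h => ?_⟩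
  · rw [IsIdempotentElem, ← h]
    exact isIdempotentElem_mul_of_mul_mul_eq' (hinv s)
  · rw [star_eq_self_of_isIdempotentElem hinv hinv2 hcomm h, h]

end Involution

section Metric

variable {d : S → S → ℝ≥0∞}

theorem dist_mul_le_of_mul_mul_eq (hsymm : ∀ x y : S, d x y = d y x)
    (hsub : ∀ s t x : S, d (s * x) (t * x) ≤ d s t) {x a : S} (h : a * x * a = a) :
    d (x * a) a ≤ d (a * x) x :=
  calc d (x * a) a = d (a * x * a) (x * a) := by rw [h, hsymm]
    _ ≤ d (a * x) x := hsub _ _ _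

theorem dist_star_mul_self_eq (hinv : ∀ s : S, s * star s * s = s)
    (hinv2 : ∀ s : S, star s * s * star s = star s) (hsymm : ∀ x y : S, d x y = d y x)
    (hsub : ∀ s t x : S, d (s * x) (t * x) ≤ d s t) (s : S) :
    d (star s * s) s = d (s * star s) (star s) :=
  le_antisymm (dist_mul_le_of_mul_mul_eq hsymm hsub (hinv s))
    (dist_mul_le_of_mul_mul_eq hsymm hsub (hinv2 s))

theorem dist_star_mul_self_mul_le (hinv : ∀ s : S, s * star s * s = s)
    (hinv2 : ∀ s : S, star s * s * star s = star s)
    (hcomm : ∀ e f : S, e * e = e → f * f = f → e * f = f * e)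
    (hsymm : ∀ x y : S, d x y = d y x) (htri : ∀ x y z : S, d x z ≤ d x y + d y z)
    (hsub : ∀ s t x : S, d (s * x) (t * x) ≤ d s t) (s t : S) :
    d (star (s * t) * (s * t)) (s * t) ≤ d (star s * s) s + d (star t * t) t := by
  have hfix : star s * s * (t * star t * star s) = t * star t * star s :=
    calc star s * s * (t * star t * star s) = t * star t * (star s * s * star s) := by
          rw [← mul_assoc, star_mul_self_mul_comm hinv hcomm]; simp only [mul_assoc]
      _ = t * star t * star s := by rw [hinv2]
  have hleft : d (s * t * (star t * star s)) (t * star t * star s) ≤ d (star s * s) s :=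
    calc d (s * t * (star t * star s)) (t * star t * star s)
        = d (s * (t * star t * star s)) (star s * s * (t * star t * star s)) := by
          rw [hfix]; simp only [mul_assoc]
      _ ≤ d s (star s * s) := hsub _ _ _
      _ = d (star s * s) s := hsymm _ _
  have hright : d (t * star t * star s) (star t * star s) ≤ d (star t * t) t := by
    rw [dist_star_mul_self_eq hinv hinv2 hsymm hsub t]
    exact hsub _ _ _
  calc d (star (s * t) * (s * t)) (s * t) = d (s * t * (star t * star s)) (star t * star s) := by
        rw [dist_star_mul_self_eq hinv hinv2 hsymm hsub, star_mul hinv hinv2 hcomm]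
    _ ≤ d (s * t * (star t * star s)) (t * star t * star s)
        + d (t * star t * star s) (star t * star s) := htri _ _ _
    _ ≤ d (star s * s) s + d (star t * t) t := add_le_add hleft hright

end Metric

end InverseSemigroup
/-- `l(s) := d(s*s, s)` is a (finite-valued) length function: it vanishes exactly
on idempotents, is invariant under `*`, and is subadditive. -/
theorem stmt_8 {S : Type*} [Semigroup S] (star : S → S)
    (hinv : ∀ s : S, s * star s * s = s)
    (hinv2 : ∀ s : S, star s * s * star s = star s)
    (hcomm : ∀ e f : S, e * e = e → f * f = f → e * f = f * e)
    (d : S → S → ℝ≥0∞)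
    (hrefl : ∀ x y : S, d x y = 0 ↔ x = y)
    (hsymm : ∀ x y : S, d x y = d y x)
    (htri : ∀ x y z : S, d x z ≤ d x y + d y z)
    (hcomp : ∀ x y : S, d x y ≠ ⊤ ↔ star x * x = star y * y)
    (hsub : ∀ s t x : S, d (s * x) (t * x) ≤ d s t) :
    (∀ s : S, d (star s * s) s ≠ ⊤) ∧
    (∀ s : S, d (star s * s) s = 0 ↔ s * s = s) ∧
    (∀ s : S, d (star s * s) s = d (star (star s) * star s) (star s)) ∧
    (∀ s t : S, d (star (s * t) * (s * t)) (s * t) ≤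
      d (star s * s) s + d (star t * t) t) := by
  open InverseSemigroup in
  refine ⟨fun s => ?_, fun s => ?_, fun s => ?_,
    dist_star_mul_self_mul_le hinv hinv2 hcomm hsymm htri hsub⟩
  · have he := isIdempotentElem_mul_of_mul_mul_eq' (hinv s)
    rw [hcomp, star_eq_self_of_isIdempotentElem hinv hinv2 hcomm he, he]
  · rw [hrefl]
    exact star_mul_self_eq_self_iff hinv hinv2 hcomm
  · rw [star_star hinv hinv2 hcomm]
    exact dist_star_mul_self_eq hinv hinv2 hsymm hsub s
end

section
/- Every inverse semigroup S that is quasi-generated by a countable set admits a proper length function: a function l : S → [0,∞) with l(s)=0 iff s is idempotent, l(s)=l(s*), l(st) ≤ l(s)+l(t), and such that for every r > 0 the set {s ∈ S : 0 < l(s) ≤ r} is finitely upper bounded in the natural partial order (i.e., contained in the downward closure of a finite set). -/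
/-!
Enumerate the countable generating set as `f 0, f 1, …`, give the letters `f k` and `star (f k)`
cost `k + 1` and idempotents cost `0`, and let the length of `s` be the least total cost of
a word in these letters equal to `s`. Since `e * c = c * (star c * e * c)` with `star c * e * c`
idempotent, idempotent letters can be pushed to the right end of a word, so every non-idempotent
`s` of length at most `N` is `b * e` with `e` idempotent and `b` a product of letters of total
cost at most `N`. Only finitely many letters have cost at most `N`, so there are finitely many
such `b`, and `s = b * e` means `s ≤ b`.
-/

open scoped NNReal

section

variable {S : Type*} [Semigroup S]

structure IsInverseSemigroup (star : S → S) : Prop where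
  mul_star_mul : ∀ s, s * star s * s = s
  star_mul_star : ∀ s, star s * s * star s = star s
  idempotent_commute : ∀ e f : S, IsIdempotentElem e → IsIdempotentElem f → Commute e f

theorem isIdempotentElem_mul_of_mul_mul {s x : S} (h : s * x * s = s) :
    IsIdempotentElem (s * x) := by
  rw [IsIdempotentElem, ← mul_assoc, h]

theorem eq_of_mul_mul_of_mul_mul
    (hcomm : ∀ e f : S, IsIdempotentElem e → IsIdempotentElem f → Commute e f) {s x y : S}
    (hx₁ : s * x * s = s) (hx₂ : x * s * x = x) (hy₁ : s * y * s = s) (hy₂ : y * s * y = y) :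
    x = y := by
  have hsx := isIdempotentElem_mul_of_mul_mul hx₁
  have hsy := isIdempotentElem_mul_of_mul_mul hy₁
  have hxs := isIdempotentElem_mul_of_mul_mul hx₂
  have hys := isIdempotentElem_mul_of_mul_mul hy₂
  calc x = x * (s * y * s) * x := by rw [hy₁, hx₂]
    _ = x * ((s * y) * (s * x)) := by simp only [mul_assoc]
    _ = (x * s * x) * (s * y) := by rw [(hcomm _ _ hsy hsx).eq]; simp only [mul_assoc]
    _ = x * s * (y * s * y) := by rw [hx₂, hy₂, mul_assoc]
    _ = (y * s) * (x * s) * y := by rw [(hcomm _ _ hys hxs).eq]; simp only [mul_assoc]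
    _ = y * (s * x * s) * y := by simp only [mul_assoc]
    _ = y := by rw [hx₁, hy₂]

namespace IsInverseSemigroup

variable {star : S → S}

theorem isIdempotentElem_star_mul_self (h : IsInverseSemigroup star) (s : S) :
    IsIdempotentElem (star s * s) :=
  isIdempotentElem_mul_of_mul_mul (h.star_mul_star s)

theorem isIdempotentElem_mul_star_self (h : IsInverseSemigroup star) (s : S) :
    IsIdempotentElem (s * star s) :=
  isIdempotentElem_mul_of_mul_mul (h.mul_star_mul s)

theorem isIdempotentElem_mul (h : IsInverseSemigroup star) {e f : S} (he : IsIdempotentElem e)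
    (hf : IsIdempotentElem f) : IsIdempotentElem (e * f) :=
  he.mul_of_commute (h.idempotent_commute e f he hf) hf

theorem star_eq_of_mul_mul (h : IsInverseSemigroup star) {s x : S} (h₁ : s * x * s = s)
    (h₂ : x * s * x = x) : star s = x :=
  eq_of_mul_mul_of_mul_mul h.idempotent_commute (h.mul_star_mul s) (h.star_mul_star s) h₁ h₂

theorem star_star (h : IsInverseSemigroup star) (s : S) : star (star s) = s :=
  h.star_eq_of_mul_mul (h.star_mul_star s) (h.mul_star_mul s)

theorem star_of_isIdempotentElem (h : IsInverseSemigroup star) {e : S} (he : IsIdempotentElem e) :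
    star e = e :=
  h.star_eq_of_mul_mul (by rw [he.eq, he.eq]) (by rw [he.eq, he.eq])

theorem star_mul (h : IsInverseSemigroup star) (s t : S) : star (s * t) = star t * star s := by
  have hcomm := h.idempotent_commute _ _ (h.isIdempotentElem_mul_star_self t)
    (h.isIdempotentElem_star_mul_self s)
  refine h.star_eq_of_mul_mul ?_ ?_
  · calc s * t * (star t * star s) * (s * t) = s * ((t * star t) * (star s * s)) * t := by
          simp only [mul_assoc]
      _ = (s * star s * s) * (t * star t * t) := by rw [hcomm.eq]; simp only [mul_assoc]
      _ = s * t := by rw [h.mul_star_mul, h.mul_star_mul]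
  · calc star t * star s * (s * t) * (star t * star s)
          = star t * ((star s * s) * (t * star t)) * star s := by simp only [mul_assoc]
      _ = (star t * t * star t) * (star s * s * star s) := by
          rw [← hcomm.eq]; simp only [mul_assoc]
      _ = star t * star s := by rw [h.star_mul_star, h.star_mul_star]

theorem mul_eq_mul_star_mul_mul (h : IsInverseSemigroup star) {e : S} (he : IsIdempotentElem e)
    (c : S) : e * c = c * (star c * e * c) := by
  calc e * c = (e * (c * star c)) * c := by rw [mul_assoc e, h.mul_star_mul]
    _ = c * (star c * e * c) := by
      rw [(h.idempotent_commute _ _ he (h.isIdempotentElem_mul_star_self c)).eq]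
      simp only [mul_assoc]

theorem isIdempotentElem_star_mul_mul (h : IsInverseSemigroup star) {e : S}
    (he : IsIdempotentElem e) (c : S) : IsIdempotentElem (star c * e * c) := by
  have := h.isIdempotentElem_star_mul_self (e * c)
  rwa [h.star_mul, h.star_of_isIdempotentElem he, ← mul_assoc, mul_assoc (star c) e e, he.eq]
    at this

theorem eq_mul_star_mul_self_of_eq_mul (h : IsInverseSemigroup star) {s t e : S}
    (he : IsIdempotentElem e) (hs : s = t * e) : s = t * (star s * s) := by
  have hcomm := h.idempotent_commute _ _ he (h.isIdempotentElem_star_mul_self t)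
  calc s = t * star t * t * (e * e) := by rw [h.mul_star_mul, he.eq, hs]
    _ = t * ((star t * t) * e) * e := by simp only [mul_assoc]
    _ = t * (e * (star t * t)) * e := by rw [hcomm.eq]
    _ = t * (star s * s) := by
      rw [hs, h.star_mul, h.star_of_isIdempotentElem he]; simp only [mul_assoc]

end IsInverseSemigroup

section Cost

variable (star : S → S) (f : ℕ → S)

inductive HasCost : S → ℕ → Prop
  | idempotent {e : S} : IsIdempotentElem e → HasCost e 0
  | gen (k : ℕ) : HasCost (f k) (k + 1)
  | star_gen (k : ℕ) : HasCost (star (f k)) (k + 1)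
  | mul {s t : S} {m n : ℕ} : HasCost s m → HasCost t n → HasCost (s * t) (m + n)

inductive IsWord : S → ℕ → Prop
  | gen (k : ℕ) : IsWord (f k) (k + 1)
  | star_gen (k : ℕ) : IsWord (star (f k)) (k + 1)
  | mul {s t : S} {m n : ℕ} : IsWord s m → IsWord t n → IsWord (s * t) (m + n)

variable {star f}

theorem HasCost.map_star (h : IsInverseSemigroup star) {s : S} {n : ℕ} (hs : HasCost star f s n) :
    HasCost star f (star s) n := by
  induction hs with
  | idempotent he => rw [h.star_of_isIdempotentElem he]; exact .idempotent he
  | gen k => exact .star_gen k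
  | star_gen k => rw [h.star_star]; exact .gen k
  | mul _ _ ihs iht => rw [h.star_mul, Nat.add_comm]; exact .mul iht ihs

theorem HasCost.isIdempotentElem (h : IsInverseSemigroup star) {s : S}
    (hs : HasCost star f s 0) : IsIdempotentElem s := by
  generalize hn : 0 = n at hs
  induction hs with
  | idempotent he => exact he
  | gen k | star_gen k => omega
  | mul _ _ ihs iht => exact h.isIdempotentElem_mul (ihs (by omega)) (iht (by omega))

theorem IsWord.pos {b : S} {n : ℕ} (hb : IsWord star f b n) : 0 < n := by
  induction hb <;> omega

variable (star f) in
theorem finite_setOf_isWord (N : ℕ) : {b | ∃ n ≤ N, IsWord star f b n}.Finite := by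
  induction N with
  | zero => exact Set.finite_empty.subset fun b ⟨n, hn, hb⟩ => by have := hb.pos; omega
  | succ N ih =>
    refine ((ih.union (Set.toFinite {f N, star (f N)})).union (ih.image2 (· * ·) ih)).subset ?_
    rintro b ⟨n, hn, hb⟩
    rcases hn.lt_or_eq with hn | hn
    · exact .inl (.inl ⟨n, Nat.lt_succ_iff.mp hn, hb⟩)
    cases hb with
    | gen k | star_gen k => obtain rfl := Nat.succ_inj.mp hn; simp
    | mul hs ht =>
      have := hs.pos
      have := ht.pos
      exact .inr ⟨_, ⟨_, by omega, hs⟩, _, ⟨_, by omega, ht⟩, rfl⟩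

theorem HasCost.exists_isWord (h : IsInverseSemigroup star) {s : S} {n : ℕ}
    (hs : HasCost star f s n) : IsIdempotentElem s ∨
      ∃ b m e, m ≤ n ∧ IsWord star f b m ∧ IsIdempotentElem e ∧ s = b * e := by
  induction hs with
  | idempotent he => exact .inl he
  | gen k => exact .inr ⟨f k, k + 1, star (f k) * f k, le_rfl, .gen k,
      h.isIdempotentElem_star_mul_self _, by rw [← mul_assoc, h.mul_star_mul]⟩
  | star_gen k => exact .inr ⟨star (f k), k + 1, f k * star (f k), le_rfl, .star_gen k,
      h.isIdempotentElem_mul_star_self _, by rw [← mul_assoc, h.star_mul_star]⟩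
  | @mul s t _ _ _ _ ihs iht =>
    rcases ihs with hs | ⟨b, m, e, hm, hb, he, rfl⟩ <;>
      rcases iht with ht | ⟨c, m', e', hm', hc, he', rfl⟩
    · exact .inl (h.isIdempotentElem_mul hs ht)
    · refine .inr ⟨c, m', star c * s * c * e', by omega, hc,
        h.isIdempotentElem_mul (h.isIdempotentElem_star_mul_mul hs c) he', ?_⟩
      rw [← mul_assoc, h.mul_eq_mul_star_mul_mul hs, mul_assoc]
    · exact .inr ⟨b, m, e * t, by omega, hb, h.isIdempotentElem_mul he ht, mul_assoc ..⟩
    · refine .inr ⟨b * c, _, star c * e * c * e', by omega, hb.mul hc,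
        h.isIdempotentElem_mul (h.isIdempotentElem_star_mul_mul he c) he', ?_⟩
      rw [mul_assoc b, ← mul_assoc e, h.mul_eq_mul_star_mul_mul he]
      simp only [mul_assoc]

theorem exists_hasCost_of_mem_closure {s : S}
    (hs : s ∈ Subsemigroup.closure (Set.range f ∪ star '' Set.range f ∪ {e | IsIdempotentElem e})) :
    ∃ n, HasCost star f s n := by
  induction hs using Subsemigroup.closure_induction with
  | mem x hx =>
    rcases hx with (⟨k, rfl⟩ | ⟨_, ⟨k, rfl⟩, rfl⟩) | hx
    · exact ⟨_, .gen k⟩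
    · exact ⟨_, .star_gen k⟩
    · exact ⟨_, .idempotent hx⟩
  | mul _ _ _ _ ihx ihy =>
    obtain ⟨m, hm⟩ := ihx
    obtain ⟨n, hn⟩ := ihy
    exact ⟨_, hm.mul hn⟩

-- `sInf ∅ = 0`: this is the least cost only when `s` has some cost.
variable (star f) in
noncomputable def costLength (s : S) : ℕ := sInf {n | HasCost star f s n}

theorem costLength_le {s : S} {n : ℕ} (hs : HasCost star f s n) : costLength star f s ≤ n :=
  Nat.sInf_le hs

theorem hasCost_costLength (hgen : ∀ s, ∃ n, HasCost star f s n) (s : S) :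
    HasCost star f s (costLength star f s) :=
  Nat.sInf_mem (hgen s)

theorem costLength_eq_zero_iff (h : IsInverseSemigroup star)
    (hgen : ∀ s, ∃ n, HasCost star f s n) {s : S} :
    costLength star f s = 0 ↔ IsIdempotentElem s :=
  ⟨fun h0 => (h0 ▸ hasCost_costLength hgen s).isIdempotentElem h,
    fun he => Nat.le_zero.mp (costLength_le (.idempotent he))⟩

theorem costLength_star (h : IsInverseSemigroup star) (hgen : ∀ s, ∃ n, HasCost star f s n)
    (s : S) : costLength star f (star s) = costLength star f s := by
  refine le_antisymm (costLength_le ((hasCost_costLength hgen s).map_star h)) ?_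
  simpa only [h.star_star] using costLength_le ((hasCost_costLength hgen (star s)).map_star h)

theorem costLength_mul_le (hgen : ∀ s, ∃ n, HasCost star f s n) (s t : S) :
    costLength star f (s * t) ≤ costLength star f s + costLength star f t :=
  costLength_le ((hasCost_costLength hgen s).mul (hasCost_costLength hgen t))

theorem exists_finset_forall_costLength_le (h : IsInverseSemigroup star)
    (hgen : ∀ s, ∃ n, HasCost star f s n) (N : ℕ) :
    ∃ G : Finset S, ∀ s, 0 < costLength star f s → costLength star f s ≤ N →
      ∃ b ∈ G, s = b * (star s * s) := by
  refine ⟨(finite_setOf_isWord star f N).toFinset, fun s hpos hle => ?_⟩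
  rcases (hasCost_costLength hgen s).exists_isWord h with hs | ⟨b, m, e, hm, hb, he, hs⟩
  · exact absurd ((costLength_eq_zero_iff h hgen).mpr hs) hpos.ne'
  · exact ⟨b, (Set.Finite.mem_toFinset _).mpr ⟨m, hm.trans hle, hb⟩,
      h.eq_mul_star_mul_self_of_eq_mul he hs⟩

end Cost

end

/-- Every quasi-countable inverse semigroup admits a proper length function. -/
theorem stmt_15 {S : Type*} [Semigroup S] (star : S → S)
    (hinv : ∀ s : S, s * star s * s = s)
    (hinv2 : ∀ s : S, star s * s * star s = star s)
    (hcomm : ∀ e f : S, e * e = e → f * f = f → e * f = f * e)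
    (hqc : ∃ F : Set S, F.Countable ∧
      Subsemigroup.closure (F ∪ star '' F ∪ {e : S | e * e = e}) = ⊤) :
    ∃ l : S → ℝ≥0,
      (∀ s : S, l s = 0 ↔ s * s = s) ∧
      (∀ s : S, l (star s) = l s) ∧
      (∀ s t : S, l (s * t) ≤ l s + l t) ∧
      (∀ r : ℝ≥0, 0 < r → ∃ G : Finset S, ∀ s : S, 0 < l s → l s ≤ r →
        ∃ b ∈ G, s = b * (star s * s)) := by
  rcases isEmpty_or_nonempty S with hS | hS
  · exact ⟨0, isEmptyElim, isEmptyElim, isEmptyElim, fun _ _ => ⟨∅, isEmptyElim⟩⟩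
  have h : IsInverseSemigroup star := ⟨hinv, hinv2, hcomm⟩
  obtain ⟨F, hFc, hF⟩ := hqc
  obtain ⟨f, hFf⟩ := Set.countable_iff_exists_subset_range.mp hFc
  have hgen : ∀ s, ∃ n, HasCost star f s n := fun s =>
    exists_hasCost_of_mem_closure <| Subsemigroup.closure_mono
      (Set.union_subset_union_left _ (Set.union_subset_union hFf (Set.image_mono hFf)))
      (hF ▸ Subsemigroup.mem_top s)
  refine ⟨fun s => costLength star f s, fun s => ?_, fun s => ?_, fun s t => ?_, fun r _ => ?_⟩
  · exact Nat.cast_eq_zero.trans (costLength_eq_zero_iff h hgen)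
  · exact congrArg Nat.cast (costLength_star h hgen s)
  · exact (Nat.cast_le.mpr (costLength_mul_le hgen s t)).trans_eq (Nat.cast_add _ _)
  · obtain ⟨G, hG⟩ := exists_finset_forall_costLength_le h hgen ⌈r⌉₊
    exact ⟨G, fun s hpos hle =>
      hG s (Nat.cast_pos.mp hpos) (Nat.cast_le.mp (hle.trans (Nat.le_ceil r)))⟩
end

section
/- Let S be an inverse monoid with a proper right subinvariant extended metric d whose components are the L-classes. Suppose every finitely generated inverse submonoid of S is finite. Then for every r > 0, the r-components of (S,d) have uniformly bounded cardinality; in particular (S,d) has asymptotic dimension 0. -/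
/-!
Properness gives a finite set `F` such that every `r`-step `x ↦ y` is left multiplication by an
element of `F`. Hence the `r`-component of `s` lies in `M * s`, where `M` is the inverse submonoid
generated by `F`, which is finite by hypothesis; this bounds all components by `|M|`. A shortest
`r`-path inside a component visits each point once, so it has fewer than `|M|` steps, and the
triangle inequality bounds the diameter by `|M| r`.
-/

open scoped ENNReal

section Monoid

variable {S : Type*} [Monoid S] {M : Submonoid S} {R : S → S → Prop}

theorem Submonoid.exists_mem_mul_of_reflTransGen (hR : ∀ x y, x ≠ y → R x y → ∃ f ∈ M, y = f * x)
    {s t : S} (h : Relation.ReflTransGen R s t) : ∃ m ∈ M, t = m * s := by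
  induction h with
  | refl => exact ⟨1, M.one_mem, (one_mul s).symm⟩
  | @tail b c _ hbc ih =>
    obtain ⟨m, hm, rfl⟩ := ih
    by_cases hne : m * s = c
    · exact ⟨m, hm, hne.symm⟩
    · obtain ⟨f, hf, rfl⟩ := hR _ _ hne hbc
      exact ⟨f * m, M.mul_mem hf hm, (mul_assoc f m s).symm⟩

theorem Submonoid.setOf_reflTransGen_subset_image_mul
    (hR : ∀ x y, x ≠ y → R x y → ∃ f ∈ M, y = f * x) (s : S) :
    {t | Relation.ReflTransGen R s t} ⊆ (· * s) '' M := by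
  intro t ht
  obtain ⟨m, hm, rfl⟩ := exists_mem_mul_of_reflTransGen hR ht
  exact ⟨m, hm, rfl⟩

theorem Submonoid.finite_setOf_reflTransGen (hM : (M : Set S).Finite)
    (hR : ∀ x y, x ≠ y → R x y → ∃ f ∈ M, y = f * x) (s : S) :
    {t | Relation.ReflTransGen R s t}.Finite :=
  (hM.image _).subset (setOf_reflTransGen_subset_image_mul hR s)

theorem Submonoid.ncard_setOf_reflTransGen_le (hM : (M : Set S).Finite)
    (hR : ∀ x y, x ≠ y → R x y → ∃ f ∈ M, y = f * x) (s : S) :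
    {t | Relation.ReflTransGen R s t}.ncard ≤ (M : Set S).ncard :=
  (Set.ncard_le_ncard (setOf_reflTransGen_subset_image_mul hR s) (hM.image _)).trans
    (Set.ncard_image_le hM)

end Monoid

section Graph

variable {V : Type*} {G : SimpleGraph V}

theorem SimpleGraph.Reachable.exists_walk_length_lt {x y : V} (h : G.Reachable x y)
    (hfin : {t | G.Reachable x t}.Finite) :
    ∃ p : G.Walk x y, p.length < {t | G.Reachable x t}.ncard := by
  classical
  obtain ⟨w⟩ := h
  refine ⟨w.bypass, ?_⟩
  have hsupp : (w.bypass.support.toFinset : Set V) ⊆ {t | G.Reachable x t} :=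
    fun u hu => ⟨w.bypass.takeUntil u (List.mem_toFinset.mp hu)⟩
  calc w.bypass.length < w.bypass.support.toFinset.card := by
        rw [List.toFinset_card_of_nodup w.bypass_isPath.support_nodup,
          SimpleGraph.Walk.length_support]
        exact Nat.lt_succ_self _
    _ = (w.bypass.support.toFinset : Set V).ncard := (Set.ncard_coe_finset _).symm
    _ ≤ _ := Set.ncard_le_ncard hsupp hfin

theorem SimpleGraph.Walk.le_length_mul {d : V → V → ℝ≥0∞} {r : ℝ≥0∞} (hself : ∀ x, d x x = 0)
    (htri : ∀ x y z, d x z ≤ d x y + d y z) (hadj : ∀ a b, G.Adj a b → d a b ≤ r) {u v : V}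
    (p : G.Walk u v) : d u v ≤ p.length * r := by
  induction p with
  | nil => simp [hself]
  | @cons a b c hab q ih =>
    calc d a c ≤ d a b + d b c := htri a b c
      _ ≤ r + q.length * r := add_le_add (hadj a b hab) ih
      _ = (q.cons hab).length * r := by
        rw [SimpleGraph.Walk.length_cons]; push_cast; ring

end Graph

theorem le_ncard_mul_of_reflTransGen {α : Type*} {d : α → α → ℝ≥0∞} {r : ℝ≥0∞}
    (hself : ∀ x, d x x = 0) (hsymm : ∀ x y, d x y = d y x)
    (htri : ∀ x y z, d x z ≤ d x y + d y z) {x y : α}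
    (hfin : {t | Relation.ReflTransGen (fun a b => d a b ≤ r) x t}.Finite)
    (h : Relation.ReflTransGen (fun a b => d a b ≤ r) x y) :
    d x y ≤ {t | Relation.ReflTransGen (fun a b => d a b ≤ r) x t}.ncard * r := by
  have sym : Std.Symm fun a b => d a b ≤ r := ⟨fun a b hab => hsymm b a ▸ hab⟩
  let G := SimpleGraph.fromEdgeSet (Sym2.fromRel sym)
  have hG : G.Reachable = Relation.ReflTransGen _ :=
    SimpleGraph.reachable_fromEdgeSet_fromRel_eq_reflTransGen sym
  rw [← hG] at hfin h ⊢
  obtain ⟨p, hp⟩ := h.exists_walk_length_lt hfin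
  calc d x y ≤ p.length * r :=
        p.le_length_mul hself htri fun a b hab => (SimpleGraph.fromEdgeSet_adj _).mp hab |>.1
    _ ≤ _ := by gcongr

theorem stmt_18_general {S : Type*} [Monoid S] (star : S → S)
    (d : S → S → ℝ≥0∞)
    (hrefl : ∀ x y : S, d x y = 0 ↔ x = y)
    (hsymm : ∀ x y : S, d x y = d y x)
    (htri : ∀ x y z : S, d x z ≤ d x y + d y z)
    (hproper : ∀ r : ℝ≥0∞, r ≠ ⊤ →
      ∃ F : Finset S, ∀ x y : S, x ≠ y → d x y ≤ r → ∃ f ∈ F, y = f * x)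
    (hlf : ∀ F : Finset S,
      ((Submonoid.closure ((F : Set S) ∪ star '' (F : Set S)) : Submonoid S) : Set S).Finite) :
    ∀ r : ℝ≥0∞, 0 < r → r ≠ ⊤ →
      (∃ N : ℕ, ∀ s : S,
        {t : S | Relation.ReflTransGen (fun a b : S => d a b ≤ r) s t}.Finite ∧
        Nat.card {t : S | Relation.ReflTransGen (fun a b : S => d a b ≤ r) s t} ≤ N) ∧
      (∃ D : ℝ≥0∞, D ≠ ⊤ ∧ ∀ x y : S,
        Relation.ReflTransGen (fun a b : S => d a b ≤ r) x y → d x y ≤ D) := by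
  intro r _ hr
  obtain ⟨F, hF⟩ := hproper r hr
  set M := Submonoid.closure ((F : Set S) ∪ star '' (F : Set S))
  have hM : ∀ x y, x ≠ y → d x y ≤ r → ∃ f ∈ M, y = f * x := fun x y hxy hd =>
    let ⟨f, hf, hy⟩ := hF x y hxy hd
    ⟨f, Submonoid.subset_closure (Or.inl hf), hy⟩
  have hfin := Submonoid.finite_setOf_reflTransGen (hlf F) hM
  have hcard := Submonoid.ncard_setOf_reflTransGen_le (hlf F) hM
  refine ⟨⟨(M : Set S).ncard, fun s => ⟨hfin s, (Nat.card_coe_set_eq _).trans_le (hcard s)⟩⟩,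
    ⟨(M : Set S).ncard * r, ENNReal.mul_ne_top (ENNReal.natCast_ne_top _) hr, fun x y hxy => ?_⟩⟩
  calc d x y ≤ _ := le_ncard_mul_of_reflTransGen (fun x => (hrefl x x).2 rfl) hsymm htri
        (hfin x) hxy
    _ ≤ _ := mul_le_mul_left (Nat.cast_le.mpr (hcard x)) r

/-- If every finitely generated inverse submonoid of `S` is finite, then the
`r`-components of `(S,d)` have uniformly bounded cardinality and uniformly
bounded diameter (asymptotic dimension 0). -/
theorem stmt_18 {S : Type*} [Monoid S] (star : S → S)
    (hinv : ∀ s : S, s * star s * s = s)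
    (hinv2 : ∀ s : S, star s * s * star s = star s)
    (hcomm : ∀ e f : S, e * e = e → f * f = f → e * f = f * e)
    (d : S → S → ℝ≥0∞)
    (hrefl : ∀ x y : S, d x y = 0 ↔ x = y)
    (hsymm : ∀ x y : S, d x y = d y x)
    (htri : ∀ x y z : S, d x z ≤ d x y + d y z)
    (hcomp : ∀ x y : S, d x y ≠ ⊤ ↔ star x * x = star y * y)
    (hsub : ∀ s t x : S, d (s * x) (t * x) ≤ d s t)
    (hproper : ∀ r : ℝ≥0∞, r ≠ ⊤ →
      ∃ F : Finset S, ∀ x y : S, x ≠ y → d x y ≤ r → ∃ f ∈ F, y = f * x)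
    (hlf : ∀ F : Finset S,
      ((Submonoid.closure ((F : Set S) ∪ star '' (F : Set S)) : Submonoid S) : Set S).Finite) :
    ∀ r : ℝ≥0∞, 0 < r → r ≠ ⊤ →
      (∃ N : ℕ, ∀ s : S,
        {t : S | Relation.ReflTransGen (fun a b : S => d a b ≤ r) s t}.Finite ∧
        Nat.card {t : S | Relation.ReflTransGen (fun a b : S => d a b ≤ r) s t} ≤ N) ∧
      (∃ D : ℝ≥0∞, D ≠ ⊤ ∧ ∀ x y : S,
        Relation.ReflTransGen (fun a b : S => d a b ≤ r) x y → d x y ≤ D) :=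
  stmt_18_general star d hrefl hsymm htri hproper hlf
end

section
/- Let S be an inverse monoid with a proper right subinvariant extended metric d whose components are the L-classes. Suppose every finitely generated inverse submonoid of S has only finite L-classes. Then for every r > 0 and every s ∈ S, the r-component of s in (S,d) is finite; i.e., (S,d) is sparse. -/
open scoped ENNReal

/-!
Properness gives a finite set `F` such that every step of length at most `r` is a left
multiplication by an element of `F`. Hence the `r`-component of `s` lies in the inverse
submonoid generated by `F ∪ {s}`, and, since steps of finite length stay inside one
L-class, in the L-class of `s` there, which is finite by hypothesis.
-/

namespace Relation.ReflTransGen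

variable {α : Type*} {R : α → α → Prop} {a b : α}

theorem eq_of_forall_rel_imp_eq {β : Type*} (g : α → β) (hg : ∀ x y, R x y → g x = g y)
    (h : ReflTransGen R a b) : g a = g b := by
  induction h with
  | refl => rfl
  | tail _ hstep ih => exact ih.trans (hg _ _ hstep)

theorem mem_submonoid {M : Type*} [Monoid M] {R : M → M → Prop} (N : Submonoid M)
    (hR : ∀ x y, x ≠ y → R x y → ∃ f ∈ N, y = f * x) {s t : M} (hs : s ∈ N)
    (h : ReflTransGen R s t) : t ∈ N := by
  induction h with
  | refl => exact hs
  | @tail x y _ hstep ih =>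
    by_cases hxy : x = y
    · exact hxy ▸ ih
    · obtain ⟨f, hf, rfl⟩ := hR x y hxy hstep
      exact N.mul_mem hf ih

end Relation.ReflTransGen

theorem stmt_19_general {S : Type*} [Monoid S] (star : S → S)
    (d : S → S → ℝ≥0∞)
    (hcomp : ∀ x y : S, d x y ≠ ⊤ ↔ star x * x = star y * y)
    (hproper : ∀ r : ℝ≥0∞, r ≠ ⊤ →
      ∃ F : Finset S, ∀ x y : S, x ≠ y → d x y ≤ r → ∃ f ∈ F, y = f * x)
    (hlf : ∀ F : Finset S, ∀ t ∈ Submonoid.closure ((F : Set S) ∪ star '' (F : Set S)),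
      {x : S | x ∈ Submonoid.closure ((F : Set S) ∪ star '' (F : Set S)) ∧
        star x * x = star t * t}.Finite) :
    ∀ r : ℝ≥0∞, 0 < r → r ≠ ⊤ → ∀ s : S,
      {t : S | Relation.ReflTransGen (fun a b : S => d a b ≤ r) s t}.Finite := by
  classical
  intro r _ hr s
  obtain ⟨F, hF⟩ := hproper r hr
  set G : Finset S := insert s F
  set N := Submonoid.closure ((G : Set S) ∪ star '' (G : Set S))
  have hGN : ∀ x ∈ G, x ∈ N := fun x hx => Submonoid.subset_closure (Or.inl hx)
  have hstep_eq_mul : ∀ x y, x ≠ y → d x y ≤ r → ∃ f ∈ N, y = f * x := fun x y hxy hle =>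
    let ⟨f, hf, hy⟩ := hF x y hxy hle
    ⟨f, hGN f (Finset.mem_insert_of_mem hf), hy⟩
  have hstep_L : ∀ x y, d x y ≤ r → star x * x = star y * y := fun x y hle =>
    (hcomp x y).1 (ne_top_of_le_ne_top hr hle)
  have hsN : s ∈ N := hGN s (Finset.mem_insert_self s F)
  refine (hlf G s hsN).subset fun t ht => ⟨?_, ?_⟩
  · exact Relation.ReflTransGen.mem_submonoid N hstep_eq_mul hsN ht
  · exact (Relation.ReflTransGen.eq_of_forall_rel_imp_eq (fun x => star x * x) hstep_L ht).symm

/-- If every finitely generated inverse submonoid of `S` has only finite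
L-classes, then every `r`-component of `(S,d)` is finite, i.e. `(S,d)` is
sparse. -/
theorem stmt_19 {S : Type*} [Monoid S] (star : S → S)
    (hinv : ∀ s : S, s * star s * s = s)
    (hinv2 : ∀ s : S, star s * s * star s = star s)
    (hcomm : ∀ e f : S, e * e = e → f * f = f → e * f = f * e)
    (d : S → S → ℝ≥0∞)
    (hrefl : ∀ x y : S, d x y = 0 ↔ x = y)
    (hsymm : ∀ x y : S, d x y = d y x)
    (htri : ∀ x y z : S, d x z ≤ d x y + d y z)
    (hcomp : ∀ x y : S, d x y ≠ ⊤ ↔ star x * x = star y * y)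
    (hsub : ∀ s t x : S, d (s * x) (t * x) ≤ d s t)
    (hproper : ∀ r : ℝ≥0∞, r ≠ ⊤ →
      ∃ F : Finset S, ∀ x y : S, x ≠ y → d x y ≤ r → ∃ f ∈ F, y = f * x)
    (hlf : ∀ F : Finset S, ∀ t ∈ Submonoid.closure ((F : Set S) ∪ star '' (F : Set S)),
      {x : S | x ∈ Submonoid.closure ((F : Set S) ∪ star '' (F : Set S)) ∧
        star x * x = star t * t}.Finite) :
    ∀ r : ℝ≥0∞, 0 < r → r ≠ ⊤ → ∀ s : S,
      {t : S | Relation.ReflTransGen (fun a b : S => d a b ≤ r) s t}.Finite :=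
  stmt_19_general star d hcomp hproper hlf
end
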